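/- Let G be a group, H ≤ G. Define for generators (s,t), (u,v) ∈ G × G a left inner product ⟨(s,t),(u,v)⟩_B = (s·u⁻¹, u·t, t⁻¹·v) ∈ G × G × H, defined (nonzero) iff tH = vH, and a right inner product ⟨(s,t),(u,v)⟩_C = (s⁻¹·u, v·H) ∈ G × (G/H), defined iff s·t = u·v. Let the module actions be (s,t)·(w, rH) = (s·w, w⁻¹·t), defined iff tH = w·r·H, and (p,q,h)·(s,t) = (p·s, t·h⁻¹), defined iff q·h = s·t. Then the imprimitivity condition holds at the combinatorial level: for x=(s,t), y=(u,v), z=(y₁,y₂) ∈ G×G, the element x·⟨y,z⟩_C is defined and equals ⟨x,y⟩_B·z whenever either side is defined. -/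
import Mathlib


/-- Echterhoff–Quigg, Theorem (imp), condition (v) `x·⟨y,z⟩_C = ⟨x,y⟩_B·z` at the
combinatorial level, for `x = (s,t)`, `y = (u,v)`, `z = (y₁,y₂)`:
the defining conditions of the two sides are equivalent, the resulting group-element data
agree, and `tH = vH` guarantees `t⁻¹·v ∈ H`. -/
theorem stmt10 {G : Type*} [Group G] (H : Subgroup G) (s t u v y₁ y₂ : G) :
    ((u * v = y₁ * y₂ ∧ (t : G ⧸ H) = ((u⁻¹ * y₁ * y₂ : G) : G ⧸ H)) ↔
      ((t : G ⧸ H) = (v : G ⧸ H) ∧ u * v = y₁ * y₂)) ∧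
      ((t : G ⧸ H) = (v : G ⧸ H) → t⁻¹ * v ∈ H) ∧
      (u * v = y₁ * y₂ →
        (s * (u⁻¹ * y₁), (u⁻¹ * y₁)⁻¹ * t) = ((s * u⁻¹) * y₁, y₂ * (t⁻¹ * v)⁻¹)) := by
  refine ⟨⟨fun ⟨h1, h2⟩ => ⟨by
      have hv : u⁻¹ * y₁ * y₂ = v := by rw [mul_assoc, ← h1]; group
      rw [h2, hv], h1⟩,
    fun ⟨h1, h2⟩ => ⟨h2, by
      have hv : u⁻¹ * y₁ * y₂ = v := by rw [mul_assoc, ← h2]; group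
      rw [h1, hv]⟩⟩,
    fun h => QuotientGroup.eq.mp h, ?_⟩
  intro h
  have hy : y₂ = y₁⁻¹ * (u * v) := by rw [h]; group
  subst hy
  exact Prod.ext (by group) (by group)
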